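/- Let Q be a finite quiver, let d ≥ 2, and let ρ be a d-covering set of paths of Q, each of length d. Let α be a loop of Q with α^d ∈ ρ such that no element of ρ has the form α^{d-1}β or βα^{d-1} with β an arrow distinct from α. Then α^d has no overlaps with any element of ρ∖{α^d}: no element of ρ other than α^d properly overlaps α^d, and α^d does not properly overlap any element of ρ other than α^d. -/

import Mathlib

open Quiver

universe u v

variable {V : Type u} [Quiver.{v + 1} V]

/-- The type of paths of a quiver, bundled with their endpoints. -/
abbrev SPath (V : Type u) [Quiver.{v + 1} V] := Σ a b : V, Quiver.Path a b

/-- The type of arrows of a quiver, bundled with their endpoints. -/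
abbrev SArrow (V : Type u) [Quiver.{v + 1} V] := Σ a b : V, a ⟶ b

/-- A set of paths in a quiver, given as a predicate on paths with arbitrary endpoints. -/
abbrev PathSet (V : Type u) [Quiver.{v + 1} V] := ∀ ⦃a b : V⦄, Quiver.Path a b → Prop

/-- `p` is a prefix of `q`. -/
def IsPrefixP {a b c : V} (p : Quiver.Path a b) (q : Quiver.Path a c) : Prop :=
  ∃ p' : Quiver.Path b c, q = p.comp p'

/-- `p` is a suffix of `q`. -/
def IsSuffixP {a b c : V} (p : Quiver.Path b c) (q : Quiver.Path a c) : Prop :=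
  ∃ p' : Quiver.Path a b, q = p'.comp p

/-- `p` is a subpath of `q`. -/
def IsSubpathP {b c a e : V} (p : Quiver.Path b c) (q : Quiver.Path a e) : Prop :=
  ∃ (u : Quiver.Path a b) (v : Quiver.Path c e), q = (u.comp p).comp v

/-- `q` overlaps `p` with overlap `p.comp u`: there are paths `u`, `v` with
`pu = vq` and `1 ≤ ℓ(u) < ℓ(q)`. -/
def OverlapsWith {x y a b : V} (q : Quiver.Path x y) (p : Quiver.Path a b)
    (u : Quiver.Path b y) : Prop :=
  ∃ v : Quiver.Path a x, p.comp u = v.comp q ∧ 1 ≤ u.length ∧ u.length < q.length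

/-- `q` properly overlaps `p` with overlap `p.comp u`: additionally `ℓ(v) ≥ 1`. -/
def ProperlyOverlapsWith {x y a b : V} (q : Quiver.Path x y) (p : Quiver.Path a b)
    (u : Quiver.Path b y) : Prop :=
  ∃ v : Quiver.Path a x, p.comp u = v.comp q ∧ 1 ≤ u.length ∧ u.length < q.length ∧
    1 ≤ v.length

/-- `q` properly overlaps `p` (with some overlap). -/
def ProperlyOverlaps {x y a b : V} (q : Quiver.Path x y) (p : Quiver.Path a b) : Prop :=
  ∃ u : Quiver.Path b y, ProperlyOverlapsWith q p u

/-- `ρ` is `d`-covering: whenever `pq ∈ ρ`, `qr ∈ ρ` and `ℓ(q) ≥ 1`, every subpath of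
`pqr` of length `d` lies in `ρ`. -/
def DCovering (d : ℕ) (ρ : PathSet V) : Prop :=
  ∀ ⦃a b c e : V⦄ (p : Quiver.Path a b) (q : Quiver.Path b c) (r : Quiver.Path c e),
    ρ (p.comp q) → ρ (q.comp r) → 1 ≤ q.length →
    ∀ ⦃x y : V⦄ (s : Quiver.Path x y), s.length = d →
      IsSubpathP s ((p.comp q).comp r) → ρ s

/-- The sets `R^n` of (iterated maximal) overlaps: `R^0` = trivial paths, `R^1` = arrows,
`R^2 = ρ`, and for `n ≥ 3`, `R^n` consists of the paths `R^{n-1}u` where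
`R^{n-1} = R^{n-2}p ∈ R^{n-1}`, some element of `ρ` overlaps `p` with overlap `pu`,
and no element of `ρ` overlaps `p` with overlap a proper prefix of `pu`. -/
def RSet (ρ : PathSet V) : ℕ → PathSet V
  | 0 => fun _ _ p => p.length = 0
  | 1 => fun _ _ p => p.length = 1
  | 2 => ρ
  | n + 3 => fun a e R =>
      ∃ (c : V) (Rp : Quiver.Path a c) (u : Quiver.Path c e),
        RSet ρ (n + 2) Rp ∧ R = Rp.comp u ∧
        ∃ (b : V) (Rpp : Quiver.Path a b) (p : Quiver.Path b c),
          RSet ρ (n + 1) Rpp ∧ Rp = Rpp.comp p ∧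
          (∃ (x : V) (q : Quiver.Path x e), ρ q ∧ OverlapsWith q p u) ∧
          ∀ (x y : V) (q : Quiver.Path x y) (u' : Quiver.Path c y),
            ρ q → OverlapsWith q p u' →
            ¬(IsPrefixP (p.comp u') (p.comp u) ∧ u'.length < u.length)

/-- `δ(n) = (n/2)d` if `n` is even, `((n-1)/2)d + 1` if `n` is odd. -/
def deltaF (d n : ℕ) : ℕ := if n % 2 = 0 then n / 2 * d else (n - 1) / 2 * d + 1

/-- The `m`-th power of a closed path. -/
def cpow {a : V} (T : Quiver.Path a a) : ℕ → Quiver.Path a a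
  | 0 => Quiver.Path.nil
  | n + 1 => (cpow T n).comp T

/-- The list of arrows of a path, in order. -/
def arrowList {a : V} : ∀ {b : V}, Quiver.Path a b → List (SArrow V)
  | _, Quiver.Path.nil => []
  | _, Quiver.Path.cons p e => arrowList p ++ [⟨_, _, e⟩]

/-- A closed trail: a nontrivial closed path with pairwise distinct arrows. -/
def IsClosedTrail {a : V} (T : Quiver.Path a a) : Prop :=
  1 ≤ T.length ∧ (arrowList T).Nodup

/-- `q` lies on the closed path `T`: `q` is a subpath of `T^m` for some `m ≥ 1`. -/
def LiesOn {x y a : V} (q : Quiver.Path x y) (T : Quiver.Path a a) : Prop :=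
  ∃ m : ℕ, 1 ≤ m ∧ IsSubpathP q (cpow T m)

/-- `ρ_T ⊆ ρ`: every path of length `d` lying on `T` belongs to `ρ`. -/
def RhoTSub (d : ℕ) (ρ : PathSet V) {a : V} (T : Quiver.Path a a) : Prop :=
  ∀ ⦃x y : V⦄ (q : Quiver.Path x y), q.length = d → LiesOn q T → ρ q

/-- `SegChain A L a b p` : the path `p` decomposes as the composite of the listed
segments, each of length `A`. -/
inductive SegChain (A : ℕ) : List (SPath V) → (a b : V) → Quiver.Path a b → Prop
  | nil (a : V) : SegChain A [] a a Quiver.Path.nil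
  | cons {a b c : V} (α : Quiver.Path a b) (hα : α.length = A) {p : Quiver.Path b c}
      {L : List (SPath V)} (hp : SegChain A L b c p) :
      SegChain A (⟨a, b, α⟩ :: L) a c (α.comp p)

/-- An `A`-path: a path which decomposes into segments of length `A`. -/
def IsAPath (A : ℕ) {a b : V} (p : Quiver.Path a b) : Prop :=
  ∃ L : List (SPath V), SegChain A L a b p

/-- `p` is an `A`-subpath of `q`: a subpath which is an `A`-path starting at a position
that is a multiple of `A`. -/
def IsASubpath (A : ℕ) {b c a e : V} (p : Quiver.Path b c) (q : Quiver.Path a e) : Prop :=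
  ∃ (u : Quiver.Path a b) (v : Quiver.Path c e),
    q = (u.comp p).comp v ∧ A ∣ u.length ∧ IsAPath A p

/-- A closed `A`-trail: a nontrivial closed `A`-path with pairwise distinct `A`-segments. -/
def IsClosedATrail (A : ℕ) {a : V} (T : Quiver.Path a a) : Prop :=
  ∃ L : List (SPath V), SegChain A L a a T ∧ L ≠ [] ∧ L.Nodup

/-- The `A`-path `q` lies on the closed `A`-path `T`: `q` is an `A`-subpath of `T^m` for
some `m ≥ 1`. -/
def ALiesOn (A : ℕ) {x y a : V} (q : Quiver.Path x y) (T : Quiver.Path a a) : Prop :=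
  ∃ m : ℕ, 1 ≤ m ∧ IsASubpath A q (cpow T m)

/-- `ρ_T ⊆ ρ` in the `(D,A)`-setting: every path of length `D` which lies on `T` as an
`A`-path belongs to `ρ`. -/
def ARhoTSub (D A : ℕ) (ρ : PathSet V) {a : V} (T : Quiver.Path a a) : Prop :=
  ∀ ⦃x y : V⦄ (q : Quiver.Path x y), q.length = D → ALiesOn A q T → ρ q

/-- The `(D,A)`-overlap property: every path in `ρ` has length `D`, and whenever
`R₂ ∈ ρ` properly overlaps `R₁ ∈ ρ` with overlap `R₁u`, then `ℓ(u) ≥ A` and some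
`R₃ ∈ ρ` properly overlaps `R₁` with overlap `R₁u'` where `ℓ(u') = A` and `u'` is a
prefix of `u`. -/
def DAOverlapProperty (D A : ℕ) (ρ : PathSet V) : Prop :=
  (∀ ⦃a b : V⦄ (p : Quiver.Path a b), ρ p → p.length = D) ∧
  ∀ ⦃a b x y : V⦄ (R₁ : Quiver.Path a b) (R₂ : Quiver.Path x y) (u : Quiver.Path b y),
    ρ R₁ → ρ R₂ → ProperlyOverlapsWith R₂ R₁ u →
    A ≤ u.length ∧
      ∃ (y' : V) (x' : V) (R₃ : Quiver.Path x' y') (u' : Quiver.Path b y'),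
        ρ R₃ ∧ ProperlyOverlapsWith R₃ R₁ u' ∧ u'.length = A ∧ IsPrefixP u' u

/-- Condition (C1), part (1), for a loop `α`. -/
def CondLoop (d : ℕ) (ρ : PathSet V) {v : V} (α : v ⟶ v) : Prop :=
  ρ (cpow (Quiver.Hom.toPath α) d) ∧
  (∀ ⦃w : V⦄ (β : v ⟶ w), (⟨v, w, β⟩ : SArrow V) ≠ ⟨v, v, α⟩ →
      ¬ ρ ((cpow (Quiver.Hom.toPath α) (d - 1)).comp (Quiver.Hom.toPath β))) ∧
  (∀ ⦃w : V⦄ (β : w ⟶ v), (⟨w, v, β⟩ : SArrow V) ≠ ⟨v, v, α⟩ →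
      ¬ ρ ((Quiver.Hom.toPath β).comp (cpow (Quiver.Hom.toPath α) (d - 1))))

/-- Condition (C1): (1) every loop `α` satisfies `α^d ∈ ρ` and no element of `ρ` has the
form `α^{d-1}β` or `βα^{d-1}` with `β` an arrow distinct from `α`; (2) for every closed
trail `T` with `ℓ(T) > 1` and `ρ_T ⊆ ρ`, no element of `ρ∖ρ_T` begins or ends with an
arrow of `T`. -/
def CondC1 (d : ℕ) (ρ : PathSet V) : Prop :=
  (∀ (v : V) (α : v ⟶ v), CondLoop d ρ α) ∧
  (∀ ⦃a : V⦄ (T : Quiver.Path a a), IsClosedTrail T → 1 < T.length → RhoTSub d ρ T →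
    ∀ ⦃x y : V⦄ (q : Quiver.Path x y), ρ q → ¬(q.length = d ∧ LiesOn q T) →
      (∀ ⦃w : V⦄ (e : x ⟶ w) (q' : Quiver.Path w y),
          q = (Quiver.Hom.toPath e).comp q' → (⟨x, w, e⟩ : SArrow V) ∉ arrowList T) ∧
      (∀ ⦃w : V⦄ (e : w ⟶ y) (q' : Quiver.Path x w),
          q = q'.comp (Quiver.Hom.toPath e) → (⟨w, y, e⟩ : SArrow V) ∉ arrowList T))

/-- Condition (C2): (1) for every `A`-loop `c`, some rotation `c'` of `c` satisfies
`c'^d ∈ ρ` and no element of `ρ` has the form `c'^{d-1}β` or `βc'^{d-1}` with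
`β` a path of length `A` distinct from `c'`; (2) for every closed `A`-trail `T` with at
least two segments and `ρ_T ⊆ ρ`, no element of `ρ∖ρ_T` begins or ends with an
`A`-segment of `T`. -/
def CondC2 (D A d : ℕ) (ρ : PathSet V) : Prop :=
  (∀ ⦃v : V⦄ (c : Quiver.Path v v), c.length = A →
    ∃ (w : V) (p : Quiver.Path v w) (q : Quiver.Path w v), c = p.comp q ∧ p.length < A ∧
      ρ (cpow (q.comp p) d) ∧
      (∀ ⦃x : V⦄ (β : Quiver.Path w x), β.length = A →
          (⟨w, x, β⟩ : SPath V) ≠ ⟨w, w, q.comp p⟩ →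
          ¬ ρ ((cpow (q.comp p) (d - 1)).comp β)) ∧
      (∀ ⦃x : V⦄ (β : Quiver.Path x w), β.length = A →
          (⟨x, w, β⟩ : SPath V) ≠ ⟨w, w, q.comp p⟩ →
          ¬ ρ (β.comp (cpow (q.comp p) (d - 1))))) ∧
  (∀ ⦃a : V⦄ (T : Quiver.Path a a) (L : List (SPath V)),
      SegChain A L a a T → L.Nodup → 2 ≤ L.length → ARhoTSub D A ρ T →
      ∀ ⦃x y : V⦄ (q : Quiver.Path x y), ρ q → ¬(q.length = D ∧ ALiesOn A q T) →
        (∀ ⦃w : V⦄ (α : Quiver.Path x w) (q' : Quiver.Path w y),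
            q = α.comp q' → (⟨x, w, α⟩ : SPath V) ∉ L) ∧
        (∀ ⦃w : V⦄ (α : Quiver.Path w y) (q' : Quiver.Path x w),
            q = q'.comp α → (⟨w, y, α⟩ : SPath V) ∉ L))


/-! If `q ∈ ρ` properly overlaps `α^d`, then `q = α^{d-k} p` and `α^d p = α^k q` for some `p`
with `1 ≤ k = ℓ(p) < d`. Since `ρ` is `d`-covering, every length-`d` subpath of `α^d p` lies in
`ρ`; reading `α^d p` arrow by arrow, the condition on `α^{d-1}β` forces each arrow of `p` to be
`α`, so `q = α^d`. The other direction is the mirror image, using the condition on `βα^{d-1}`. -/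

namespace Quiver.Path

theorem exists_eq_comp_of_comp_eq_comp {a b₁ b₂ c : V} {p₁ : Path a b₁} {q₁ : Path b₁ c}
    {p₂ : Path a b₂} {q₂ : Path b₂ c} (h : p₁.comp q₁ = p₂.comp q₂)
    (hle : p₁.length ≤ p₂.length) :
    ∃ w : Path b₁ b₂, p₂ = p₁.comp w ∧ q₁ = w.comp q₂ := by
  induction q₂ with
  | nil => exact ⟨q₁, by simpa using h.symm, by simp⟩
  | cons q₂ e ih =>
    cases q₁ with
    | nil =>
      have hlen := congrArg length h
      simp only [comp_nil, comp_cons, length_cons, length_comp] at hlen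
      omega
    | cons q₁ f =>
      simp only [comp_cons, cons.injEq] at h
      obtain ⟨rfl, h, hfe⟩ := h
      obtain ⟨w, rfl, rfl⟩ := ih h.eq
      exact ⟨w, rfl, by rw [hfe.eq, comp_cons]⟩

end Quiver.Path

open Quiver.Path

section Powers

variable {a : V} (T : Path a a)

@[simp]
theorem length_cpow (n : ℕ) : (cpow T n).length = n * T.length := by
  induction n with
  | zero => simp [cpow]
  | succ n ih => simp [cpow, ih, Nat.succ_mul]

theorem cpow_add (m n : ℕ) : cpow T (m + n) = (cpow T m).comp (cpow T n) := by
  induction n with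
  | zero => simp [cpow]
  | succ n ih => rw [← Nat.add_assoc, cpow, ih, cpow, comp_assoc]

theorem cpow_succ' (n : ℕ) : cpow T (n + 1) = T.comp (cpow T n) := by
  rw [Nat.add_comm, cpow_add, cpow, cpow, nil_comp]

theorem mem_vertices_of_mem_vertices_cpow {y : V} {n : ℕ} (hy : y ∈ (cpow T n).vertices) :
    y ∈ T.vertices := by
  induction n with
  | zero =>
    obtain rfl : y = a := by simpa [cpow] using hy
    exact start_mem_vertices T
  | succ n ih =>
    rw [cpow, vertices_comp, List.mem_append] at hy
    exact hy.elim (fun h => ih (List.mem_of_mem_dropLast h)) id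

end Powers

section LoopPowers

variable {u : V} {α : u ⟶ u} {n : ℕ}

theorem eq_of_comp_eq_cpow_toPath {x : V} {v : Path u x} {w : Path x u}
    (h : v.comp w = cpow α.toPath n) : x = u := by
  have hx : x ∈ (cpow α.toPath n).vertices := by
    rw [← h, vertices_comp]
    exact List.mem_append_right _ (start_mem_vertices w)
  simpa using mem_vertices_of_mem_vertices_cpow _ hx

theorem eq_cpow_of_comp_eq_cpow_toPath {v w : Path u u} (h : v.comp w = cpow α.toPath n) :
    v = cpow α.toPath v.length ∧ w = cpow α.toPath w.length := by
  have hn : n = v.length + w.length := by simpa using (congrArg length h).symm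
  rw [hn, cpow_add] at h
  exact (comp_inj' (by simp)).1 h

end LoopPowers

def SubpathsMem (d : ℕ) (ρ : PathSet V) {a b : V} (X : Path a b) : Prop :=
  ∀ ⦃x y : V⦄ (s : Path x y), s.length = d → IsSubpathP s X → ρ s

namespace SubpathsMem

variable {d : ℕ} {ρ : PathSet V} {a b c : V}

theorem mem {X : Path a b} (h : SubpathsMem d ρ X) {x y : V} {s : Path x y} (p : Path a x)
    (r : Path y b) (hX : X = (p.comp s).comp r) (hs : s.length = d) : ρ s :=
  h s hs ⟨p, r, hX⟩

theorem of_comp_left {X : Path b c} {w : Path a b} (h : SubpathsMem d ρ (w.comp X)) :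
    SubpathsMem d ρ X := by
  rintro x y s hs ⟨p, r, rfl⟩
  exact h.mem (w.comp p) r (by simp only [comp_assoc]) hs

theorem of_comp_right {X : Path a b} {w : Path b c} (h : SubpathsMem d ρ (X.comp w)) :
    SubpathsMem d ρ X := by
  rintro x y s hs ⟨p, r, rfl⟩
  exact h.mem p (r.comp w) (by simp only [comp_assoc]) hs

end SubpathsMem

section Loop

variable {d : ℕ} {ρ : PathSet V} {u : V} {α : u ⟶ u}

theorem exists_heq_cpow_of_subpathsMem_cpow_comp (hd : 1 ≤ d)
    (h1 : ∀ ⦃w : V⦄ (β : u ⟶ w), (⟨u, w, β⟩ : SArrow V) ≠ ⟨u, u, α⟩ →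
      ¬ ρ ((cpow α.toPath (d - 1)).comp β.toPath))
    {y : V} (p : Path u y) (H : SubpathsMem d ρ ((cpow α.toPath d).comp p)) :
    ∃ _ : y = u, HEq p (cpow α.toPath p.length) := by
  induction p with
  | nil => exact ⟨rfl, HEq.rfl⟩
  | cons p e ih =>
    rw [← comp_toPath_eq_cons, ← comp_assoc] at H
    obtain ⟨rfl, hp⟩ := ih H.of_comp_right
    have hp : p = cpow α.toPath p.length := eq_of_heq hp
    generalize p.length = k at hp
    subst hp
    have he : ρ ((cpow α.toPath (d - 1)).comp e.toPath) := by
      refine H.mem (cpow α.toPath (k + 1)) nil ?_ (by simp; omega)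
      rw [comp_nil, ← cpow_add, ← comp_assoc, ← cpow_add, show d + k = k + 1 + (d - 1) by omega]
    have he : (⟨_, _, e⟩ : SArrow V) = ⟨_, _, α⟩ := by
      by_contra hne
      exact h1 e hne he
    simp only [Sigma.mk.inj_iff, true_and] at he
    obtain ⟨rfl, rfl⟩ := he
    exact ⟨rfl, by simp [cpow]⟩

theorem exists_heq_cpow_of_subpathsMem_comp_cpow (hd : 1 ≤ d)
    (h2 : ∀ ⦃w : V⦄ (β : w ⟶ u), (⟨w, u, β⟩ : SArrow V) ≠ ⟨u, u, α⟩ →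
      ¬ ρ (β.toPath.comp (cpow α.toPath (d - 1))))
    (n : ℕ) {x : V} (p : Path x u) (hp : p.length = n)
    (H : SubpathsMem d ρ (p.comp (cpow α.toPath d))) :
    ∃ _ : x = u, HEq p (cpow α.toPath n) := by
  induction n generalizing x with
  | zero =>
    obtain rfl := eq_of_length_zero p hp
    exact ⟨rfl, heq_of_eq (Path.eq_nil_of_length_zero p hp)⟩
  | succ n ih =>
    obtain ⟨z, e, p, hpn, rfl⟩ := p.eq_toPath_comp_of_length_eq_succ hp
    rw [comp_assoc] at H
    obtain ⟨rfl, hp⟩ := ih p hpn H.of_comp_left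
    subst hp
    have he : ρ (e.toPath.comp (cpow α.toPath (d - 1))) := by
      refine H.mem nil (cpow α.toPath (n + 1)) ?_ (by simp; omega)
      rw [nil_comp, ← cpow_add, comp_assoc, ← cpow_add, show n + d = d - 1 + (n + 1) by omega]
    have he : (⟨_, _, e⟩ : SArrow V) = ⟨_, _, α⟩ := by
      by_contra hne
      exact h2 e hne he
    simp only [Sigma.mk.inj_iff] at he
    obtain ⟨rfl, -, rfl⟩ := he
    exact ⟨rfl, by rw [cpow_succ']⟩

end Loop

section Overlaps

variable {d : ℕ} {ρ : PathSet V} {u : V} {α : u ⟶ u}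

theorem not_properlyOverlaps_cpow_toPath (hcov : DCovering d ρ)
    (hαd : ρ (cpow α.toPath d))
    (h1 : ∀ ⦃w : V⦄ (β : u ⟶ w), (⟨u, w, β⟩ : SArrow V) ≠ ⟨u, u, α⟩ →
      ¬ ρ ((cpow α.toPath (d - 1)).comp β.toPath))
    {x y : V} {q : Path x y} (hq : ρ q) (hql : q.length = d)
    (hne : (⟨x, y, q⟩ : SPath V) ≠ ⟨u, u, cpow α.toPath d⟩) :
    ¬ ProperlyOverlaps q (cpow α.toPath d) := by
  rintro ⟨p, r, hcomp, -, hpq, -⟩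
  have hlen : d + p.length = r.length + d := by simpa [hql] using congrArg length hcomp
  obtain ⟨w, hαw, rfl⟩ := exists_eq_comp_of_comp_eq_comp hcomp.symm (by simp; omega)
  obtain rfl := eq_of_comp_eq_cpow_toPath hαw.symm
  have hw : w = cpow α.toPath w.length := (eq_cpow_of_comp_eq_cpow_toPath hαw.symm).2
  have hrw : r.length + w.length = d := by simpa using (congrArg length hαw).symm
  have H : SubpathsMem d ρ ((cpow α.toPath d).comp p) := by
    have H := hcov r w p (hαw ▸ hαd) hq (by omega)
    rwa [← hαw] at H
  obtain ⟨rfl, hp⟩ := exists_heq_cpow_of_subpathsMem_cpow_comp (by omega) h1 p H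
  apply hne
  rw [hw, eq_of_heq hp, ← cpow_add, show w.length + p.length = d by simpa using hql]

theorem cpow_toPath_not_properlyOverlaps (hcov : DCovering d ρ)
    (hαd : ρ (cpow α.toPath d))
    (h2 : ∀ ⦃w : V⦄ (β : w ⟶ u), (⟨w, u, β⟩ : SArrow V) ≠ ⟨u, u, α⟩ →
      ¬ ρ (β.toPath.comp (cpow α.toPath (d - 1))))
    {x y : V} {q : Path x y} (hq : ρ q) (hql : q.length = d)
    (hne : (⟨x, y, q⟩ : SPath V) ≠ ⟨u, u, cpow α.toPath d⟩) :
    ¬ ProperlyOverlaps (cpow α.toPath d) q := by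
  rintro ⟨p, r, hcomp, -, hpd, -⟩
  rw [length_cpow, length_toPath, mul_one] at hpd
  have hlen : q.length + p.length = r.length + d := by simpa using congrArg length hcomp
  obtain ⟨w, rfl, hαw⟩ := exists_eq_comp_of_comp_eq_comp hcomp.symm (by omega)
  obtain rfl := eq_of_comp_eq_cpow_toPath hαw.symm
  have hw : w = cpow α.toPath w.length := (eq_cpow_of_comp_eq_cpow_toPath hαw.symm).1
  have hwp : w.length + p.length = d := by simpa using (congrArg length hαw).symm
  have H : SubpathsMem d ρ (r.comp (cpow α.toPath d)) := by
    have H := hcov r w p hq (hαw ▸ hαd) (by omega)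
    rwa [comp_assoc, ← hαw] at H
  obtain ⟨rfl, hr⟩ := exists_heq_cpow_of_subpathsMem_comp_cpow (by omega) h2 _ r rfl H
  apply hne
  rw [hw, eq_of_heq hr, ← cpow_add, show r.length + w.length = d by simpa using hql]

end Overlaps

/-- if `α` is a loop with `α^d ∈ ρ` and no element of `ρ` has the form
`α^{d-1}β` or `βα^{d-1}` with `β` an arrow distinct from `α`, then `α^d` has no
overlaps with any element of `ρ∖{α^d}`. -/
theorem stmt_3 {V : Type u} [Quiver.{v + 1} V] [Fintype V] [∀ a b : V, Fintype (a ⟶ b)]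
    (d : ℕ) (hd : 2 ≤ d) (ρ : PathSet V)
    (hρlen : ∀ ⦃a b : V⦄ (p : Quiver.Path a b), ρ p → p.length = d)
    (hcov : DCovering d ρ)
    {u : V} (α : u ⟶ u) (hαd : ρ (cpow (Quiver.Hom.toPath α) d))
    (h1 : ∀ ⦃w : V⦄ (β : u ⟶ w), (⟨u, w, β⟩ : SArrow V) ≠ ⟨u, u, α⟩ →
      ¬ ρ ((cpow (Quiver.Hom.toPath α) (d - 1)).comp (Quiver.Hom.toPath β)))
    (h2 : ∀ ⦃w : V⦄ (β : w ⟶ u), (⟨w, u, β⟩ : SArrow V) ≠ ⟨u, u, α⟩ →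
      ¬ ρ ((Quiver.Hom.toPath β).comp (cpow (Quiver.Hom.toPath α) (d - 1)))) :
    ∀ ⦃x y : V⦄ (q : Quiver.Path x y), ρ q →
      (⟨x, y, q⟩ : SPath V) ≠ ⟨u, u, cpow (Quiver.Hom.toPath α) d⟩ →
      ¬ ProperlyOverlaps q (cpow (Quiver.Hom.toPath α) d) ∧
      ¬ ProperlyOverlaps (cpow (Quiver.Hom.toPath α) d) q := by
  intro x y q hq hne
  exact ⟨not_properlyOverlaps_cpow_toPath hcov hαd h1 hq (hρlen q hq) hne,
    cpow_toPath_not_properlyOverlaps hcov hαd h2 hq (hρlen q hq) hne⟩
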